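/- (Vanishing terminal stage cost as the horizon grows; the core of the paper's Section 4 Lemma.) Let x̄ ∈ ℝⁿ. Suppose there exist sequences (x_t)_{t∈ℕ}, (u_t)_{t∈ℕ} with x₀ = x̄, x_{t+1} = Ax_t + Bu_t, x_t ∈ 𝒳, u_t ∈ 𝒰 for all t, whose total cost ∑_{t=0}^{∞} ℓ(x_t,u_t) converges to a finite value M. Suppose moreover that for every horizon N ≥ 1 there is a pair (z^N, v^N), admissible for horizon N from x̄, that attains V_N(x̄). Then ℓ(z^N_{N−1}, v^N_{N−1}) → 0 as N → ∞. -/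

import Mathlib

open Matrix Finset

/-- The stage cost `ℓ(x,u) = ½(xᵀQx + uᵀRu)`. -/
noncomputable def stageCost {n m : ℕ} (Q : Matrix (Fin n) (Fin n) ℝ)
    (R : Matrix (Fin m) (Fin m) ℝ) (x : Fin n → ℝ) (u : Fin m → ℝ) : ℝ :=
  (1/2) * (x ⬝ᵥ Q *ᵥ x + u ⬝ᵥ R *ᵥ u)

/-- `ℓ*(x) = ½xᵀQx`, the minimal stage cost for fixed state `x`. -/
noncomputable def minStageCost {n : ℕ} (Q : Matrix (Fin n) (Fin n) ℝ)
    (x : Fin n → ℝ) : ℝ := (1/2) * (x ⬝ᵥ Q *ᵥ x)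

/-- `(z,v)` is admissible for horizon `N` from `x̄`: `z₀ = x̄`, the dynamics
`z_{τ+1} = Az_τ + Bv_τ` hold for `τ = 0,…,N−2`, `z_τ ∈ 𝒳` and `v_τ ∈ 𝒰` for
`τ = 0,…,N−1`. -/
def Admissible {n m : ℕ} (A : Matrix (Fin n) (Fin n) ℝ) (B : Matrix (Fin n) (Fin m) ℝ)
    (X : Set (Fin n → ℝ)) (U : Set (Fin m → ℝ)) (N : ℕ) (xbar : Fin n → ℝ)
    (z : ℕ → Fin n → ℝ) (v : ℕ → Fin m → ℝ) : Prop :=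
  z 0 = xbar ∧ (∀ τ, τ + 1 < N → z (τ + 1) = A *ᵥ z τ + B *ᵥ v τ) ∧
    (∀ τ < N, z τ ∈ X) ∧ (∀ τ < N, v τ ∈ U)

/-- The finite-horizon optimal value function
`V_N(x̄) = inf {∑_{τ<N} ℓ(z_τ,v_τ) : (z,v) admissible for horizon N from x̄}`. -/
noncomputable def valueFn {n m : ℕ} (A : Matrix (Fin n) (Fin n) ℝ)
    (B : Matrix (Fin n) (Fin m) ℝ) (Q : Matrix (Fin n) (Fin n) ℝ)
    (R : Matrix (Fin m) (Fin m) ℝ) (X : Set (Fin n → ℝ)) (U : Set (Fin m → ℝ))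
    (N : ℕ) (xbar : Fin n → ℝ) : ℝ :=
  sInf {r : ℝ | ∃ (z : ℕ → Fin n → ℝ) (v : ℕ → Fin m → ℝ),
    Admissible A B X U N xbar z v ∧ r = ∑ τ ∈ range N, stageCost Q R (z τ) (v τ)}

/-!
Stage costs are nonnegative, so truncating a pair admissible for horizon `M` to a horizon
`N ≤ M` keeps it admissible and does not increase its cost. Hence `V_N(x̄)` is nondecreasing in
`N`, and it is bounded by the total cost of the infinite trajectory, so it converges. Truncating
the optimal pair for horizon `N + 1` shows that its terminal stage cost is at most
`V_{N+1}(x̄) - V_N(x̄)`, which therefore tends to `0`.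
-/

section ValueFunction

variable {n m : ℕ} {A : Matrix (Fin n) (Fin n) ℝ} {B : Matrix (Fin n) (Fin m) ℝ}
  {Q : Matrix (Fin n) (Fin n) ℝ} {R : Matrix (Fin m) (Fin m) ℝ}
  {X : Set (Fin n → ℝ)} {U : Set (Fin m → ℝ)} {xbar : Fin n → ℝ}

theorem stageCost_nonneg (hQ : Q.PosSemidef) (hR : R.PosSemidef) (x : Fin n → ℝ)
    (u : Fin m → ℝ) : 0 ≤ stageCost Q R x u := by
  have hx : 0 ≤ x ⬝ᵥ Q *ᵥ x := by simpa using hQ.dotProduct_mulVec_nonneg x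
  have hu : 0 ≤ u ⬝ᵥ R *ᵥ u := by simpa using hR.dotProduct_mulVec_nonneg u
  unfold stageCost
  positivity

theorem Admissible.mono {N M : ℕ} {z : ℕ → Fin n → ℝ} {v : ℕ → Fin m → ℝ}
    (h : Admissible A B X U M xbar z v) (hNM : N ≤ M) : Admissible A B X U N xbar z v := by
  obtain ⟨h0, hdyn, hX, hU⟩ := h
  exact ⟨h0, fun τ hτ => hdyn τ (by omega), fun τ hτ => hX τ (by omega),
    fun τ hτ => hU τ (by omega)⟩

theorem admissible_of_trajectory {x : ℕ → Fin n → ℝ} {u : ℕ → Fin m → ℝ} (hx0 : x 0 = xbar)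
    (hdyn : ∀ t, x (t + 1) = A *ᵥ x t + B *ᵥ u t) (hxX : ∀ t, x t ∈ X) (huU : ∀ t, u t ∈ U)
    (N : ℕ) : Admissible A B X U N xbar x u :=
  ⟨hx0, fun τ _ => hdyn τ, fun τ _ => hxX τ, fun τ _ => huU τ⟩

theorem valueFn_le_sum (hQ : Q.PosSemidef) (hR : R.PosSemidef) {N : ℕ}
    {z : ℕ → Fin n → ℝ} {v : ℕ → Fin m → ℝ} (h : Admissible A B X U N xbar z v) :
    valueFn A B Q R X U N xbar ≤ ∑ τ ∈ range N, stageCost Q R (z τ) (v τ) := by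
  refine csInf_le ⟨0, ?_⟩ ⟨z, v, h, rfl⟩
  rintro r ⟨z', v', -, rfl⟩
  exact sum_nonneg fun τ _ => stageCost_nonneg hQ hR _ _

theorem valueFn_le_valueFn (hQ : Q.PosSemidef) (hR : R.PosSemidef) {N M : ℕ} (hNM : N ≤ M)
    (hne : ∃ z v, Admissible A B X U M xbar z v) :
    valueFn A B Q R X U N xbar ≤ valueFn A B Q R X U M xbar := by
  obtain ⟨z, v, h⟩ := hne
  refine le_csInf ⟨_, z, v, h, rfl⟩ ?_
  rintro r ⟨z', v', h', rfl⟩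
  calc valueFn A B Q R X U N xbar ≤ ∑ τ ∈ range N, stageCost Q R (z' τ) (v' τ) :=
        valueFn_le_sum hQ hR (h'.mono hNM)
    _ ≤ ∑ τ ∈ range M, stageCost Q R (z' τ) (v' τ) :=
        sum_le_sum_of_subset_of_nonneg (range_subset_range.mpr hNM)
          fun τ _ _ => stageCost_nonneg hQ hR _ _

theorem stageCost_last_le_valueFn_sub (hQ : Q.PosSemidef) (hR : R.PosSemidef) {N : ℕ}
    {z : ℕ → Fin n → ℝ} {v : ℕ → Fin m → ℝ} (h : Admissible A B X U (N + 1) xbar z v)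
    (hopt : valueFn A B Q R X U (N + 1) xbar = ∑ τ ∈ range (N + 1), stageCost Q R (z τ) (v τ)) :
    stageCost Q R (z N) (v N) ≤ valueFn A B Q R X U (N + 1) xbar - valueFn A B Q R X U N xbar := by
  have htrunc := valueFn_le_sum hQ hR (h.mono N.le_succ)
  rw [hopt, sum_range_succ]
  linarith

end ValueFunction

theorem terminal_stage_cost_tendsto_zero_general {n m : ℕ}
    (A : Matrix (Fin n) (Fin n) ℝ) (B : Matrix (Fin n) (Fin m) ℝ)
    (Q : Matrix (Fin n) (Fin n) ℝ) (hQ : Q.PosDef)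
    (R : Matrix (Fin m) (Fin m) ℝ) (hR : R.PosDef)
    (X : Set (Fin n → ℝ)) (U : Set (Fin m → ℝ))
    (xbar : Fin n → ℝ)
    (x : ℕ → Fin n → ℝ) (u : ℕ → Fin m → ℝ)
    (hx0 : x 0 = xbar)
    (hdyn : ∀ t : ℕ, x (t + 1) = A *ᵥ x t + B *ᵥ u t)
    (hxX : ∀ t : ℕ, x t ∈ X) (huU : ∀ t : ℕ, u t ∈ U)
    (hsum : Summable (fun t => stageCost Q R (x t) (u t)))
    (z : ℕ → ℕ → Fin n → ℝ) (v : ℕ → ℕ → Fin m → ℝ)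
    (hadm : ∀ N : ℕ, 1 ≤ N → Admissible A B X U N xbar (z N) (v N))
    (hopt : ∀ N : ℕ, 1 ≤ N →
      valueFn A B Q R X U N xbar = ∑ τ ∈ range N, stageCost Q R (z N τ) (v N τ)) :
    Filter.Tendsto (fun N => stageCost Q R (z N (N - 1)) (v N (N - 1)))
      Filter.atTop (nhds 0) := by
  have hQ' := hQ.posSemidef
  have hR' := hR.posSemidef
  set V : ℕ → ℝ := fun N => valueFn A B Q R X U N xbar
  have htraj := admissible_of_trajectory hx0 hdyn hxX huU
  have hV_mono : Monotone V := fun N M hNM => valueFn_le_valueFn hQ' hR' hNM ⟨x, u, htraj M⟩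
  have hV_bdd : BddAbove (Set.range V) := by
    refine ⟨∑' t, stageCost Q R (x t) (u t), ?_⟩
    rintro _ ⟨N, rfl⟩
    exact (valueFn_le_sum hQ' hR' (htraj N)).trans
      (hsum.sum_le_tsum _ fun t _ => stageCost_nonneg hQ' hR' _ _)
  have hV_lim := tendsto_atTop_ciSup hV_mono hV_bdd
  have hV_diff : Filter.Tendsto (fun N => V (N + 1) - V N) Filter.atTop (nhds 0) := by
    simpa using (hV_lim.comp (Filter.tendsto_add_atTop_nat 1)).sub hV_lim
  rw [← Filter.tendsto_add_atTop_iff_nat 1]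
  refine squeeze_zero (fun N => stageCost_nonneg hQ' hR' _ _) (fun N => ?_) hV_diff
  simpa using stageCost_last_le_valueFn_sub hQ' hR' (hadm (N + 1) (Nat.le_add_left 1 N))
    (hopt (N + 1) (Nat.le_add_left 1 N))

/-- Vanishing terminal stage cost as the horizon grows (core of the paper's
Section 4 Lemma): if from `x̄` there is an infinite admissible trajectory with
summable total cost, and for every horizon `N ≥ 1` the pair `(z^N,v^N)` is
admissible and attains `V_N(x̄)`, then `ℓ(z^N_{N−1},v^N_{N−1}) → 0` as `N → ∞`. -/
theorem terminal_stage_cost_tendsto_zero {n m : ℕ} (hn : 1 ≤ n) (hm : 1 ≤ m)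
    (A : Matrix (Fin n) (Fin n) ℝ) (B : Matrix (Fin n) (Fin m) ℝ)
    (Q : Matrix (Fin n) (Fin n) ℝ) (hQ : Q.PosDef)
    (R : Matrix (Fin m) (Fin m) ℝ) (hR : R.PosDef)
    (X : Set (Fin n → ℝ)) (U : Set (Fin m → ℝ)) (hU0 : (0 : Fin m → ℝ) ∈ U)
    (xbar : Fin n → ℝ)
    (x : ℕ → Fin n → ℝ) (u : ℕ → Fin m → ℝ)
    (hx0 : x 0 = xbar)
    (hdyn : ∀ t : ℕ, x (t + 1) = A *ᵥ x t + B *ᵥ u t)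
    (hxX : ∀ t : ℕ, x t ∈ X) (huU : ∀ t : ℕ, u t ∈ U)
    (hsum : Summable (fun t => stageCost Q R (x t) (u t)))
    (z : ℕ → ℕ → Fin n → ℝ) (v : ℕ → ℕ → Fin m → ℝ)
    (hadm : ∀ N : ℕ, 1 ≤ N → Admissible A B X U N xbar (z N) (v N))
    (hopt : ∀ N : ℕ, 1 ≤ N →
      valueFn A B Q R X U N xbar = ∑ τ ∈ range N, stageCost Q R (z N τ) (v N τ)) :
    Filter.Tendsto (fun N => stageCost Q R (z N (N - 1)) (v N (N - 1)))
      Filter.atTop (nhds 0) :=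
  terminal_stage_cost_tendsto_zero_general A B Q hQ R hR X U xbar x u hx0 hdyn hxX huU hsum z v hadm
    hopt
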